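/- A C¹ curve u : ℝ/ℤ → ℝⁿ is embedded (injective) and regular (min_{ℝ/ℤ}|u'| > 0) if and only if bil(u) < ∞, where bil(u) = sup_{x≠y} |x−y|_{ℝ/ℤ}/|u(x)−u(y)|. -/

import Mathlib

open MeasureTheory Set Filter
open scoped RealInnerProductSpace ENNReal Topology

noncomputable section

/-- The distance on the circle `ℝ/ℤ` between the points represented by `x` and `y`. -/
def circDist (x y : ℝ) : ℝ := ‖((x - y : ℝ) : AddCircle (1 : ℝ))‖

/-- The representative of `z` modulo `1` lying in `(-1/2, 1/2]`. -/
def wrap (z : ℝ) : ℝ := 1 / 2 - Int.fract (1 / 2 - z)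

/-- Squared wedge norm `|a ∧ b|² = |a|²|b|² - ⟨a,b⟩²`. -/
def wedgeSq {n : ℕ} (a b : EuclideanSpace ℝ (Fin n)) : ℝ :=
  ‖a‖ ^ 2 * ‖b‖ ^ 2 - ⟪a, b⟫ ^ 2

/-- Wedge inner product `⟨a∧b, c∧d⟩ = ⟨a,c⟩⟨b,d⟩ - ⟨a,d⟩⟨b,c⟩`. -/
def wedgeInner {n : ℕ} (a b c d : EuclideanSpace ℝ (Fin n)) : ℝ :=
  ⟪a, c⟫ * ⟪b, d⟫ - ⟪a, d⟫ * ⟪b, c⟫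

/-- Fundamental domain for double integrals over `(ℝ/ℤ)²`. -/
def unitSq : Set (ℝ × ℝ) := Ioc (0 : ℝ) 1 ×ˢ Ioc (0 : ℝ) 1

/-- The tangent-point functional `TP` (extended-real-valued). -/
def TPe {n : ℕ} (q : ℝ) (u : ℝ → EuclideanSpace ℝ (Fin n)) : ℝ≥0∞ :=
  ENNReal.ofReal (1 / q) *
    ∫⁻ p in unitSq, ENNReal.ofReal
      (wedgeSq (deriv u p.2) (u p.1 - u p.2) ^ (q / 2) / ‖u p.1 - u p.2‖ ^ (2 * q))

/-- The tangent-point functional `TP` (real-valued). -/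
def TPr {n : ℕ} (q : ℝ) (u : ℝ → EuclideanSpace ℝ (Fin n)) : ℝ := (TPe q u).toReal

/-- The `q`-th power of the Sobolev–Slobodeckii seminorm `[f]_{W^{s,q}}` on `ℝ/ℤ`. -/
def sobSemPow {n : ℕ} (s q : ℝ) (f : ℝ → EuclideanSpace ℝ (Fin n)) : ℝ≥0∞ :=
  ∫⁻ p in unitSq, ENNReal.ofReal (‖f p.1 - f p.2‖ ^ q / circDist p.1 p.2 ^ (1 + s * q))

/-- The `W^{s,q}`-norm `‖f‖_{L^q} + [f]_{W^{s,q}}`. -/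
def Wnorm {n : ℕ} (s q : ℝ) (f : ℝ → EuclideanSpace ℝ (Fin n)) : ℝ :=
  (∫ x in Ioc (0 : ℝ) 1, ‖f x‖ ^ q) ^ (1 / q) + (sobSemPow s q f).toReal ^ (1 / q)

/-- The bi-Lipschitz constant `bil(u) = sup_{x ≢ y} |x-y|_{ℝ/ℤ}/|u(x)-u(y)|`. -/
def bil {n : ℕ} (u : ℝ → EuclideanSpace ℝ (Fin n)) : ℝ≥0∞ :=
  ⨆ (x : ℝ) (y : ℝ) (_ : circDist x y ≠ 0),
    ENNReal.ofReal (circDist x y) / ENNReal.ofReal ‖u x - u y‖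

/-- The `L^∞`-norm of the derivative of `u`. -/
def linfD {n : ℕ} (u : ℝ → EuclideanSpace ℝ (Fin n)) : ℝ≥0∞ :=
  ⨆ x : ℝ, (‖deriv u x‖₊ : ℝ≥0∞)

/-- A periodic curve is embedded if it is injective on the circle `ℝ/ℤ`. -/
def Embedded {n : ℕ} (u : ℝ → EuclideanSpace ℝ (Fin n)) : Prop :=
  ∀ x y : ℝ, u x = u y → ((x : AddCircle (1 : ℝ)) = (y : AddCircle (1 : ℝ)))

/-- A curve is regular if `min_{ℝ/ℤ} |u'| > 0`. -/
def Regular {n : ℕ} (u : ℝ → EuclideanSpace ℝ (Fin n)) : Prop :=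
  0 < ⨅ x : ℝ, ‖deriv u x‖

/-- Orthogonal projection of `b` onto the orthogonal complement of `ℝ a`. -/
def projPerp {n : ℕ} (a b : EuclideanSpace ℝ (Fin n)) : EuclideanSpace ℝ (Fin n) :=
  b - (⟪b, a⟫ / ‖a‖ ^ 2) • a

/-- The classical tangent-point functional (extended-real-valued). -/
def TPcle {n : ℕ} (q : ℝ) (u : ℝ → EuclideanSpace ℝ (Fin n)) : ℝ≥0∞ :=
  ENNReal.ofReal (1 / q) *
    ∫⁻ p in unitSq, ENNReal.ofReal
      (‖projPerp (deriv u p.2) (u p.1 - u p.2)‖ ^ q / ‖u p.1 - u p.2‖ ^ (2 * q) *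
        (‖deriv u p.1‖ * ‖deriv u p.2‖))

/-- The integrand of the functional `M(u; v, w)`. -/
def Mintegrand {n : ℕ} (q : ℝ) (u v w : ℝ → EuclideanSpace ℝ (Fin n)) (p : ℝ × ℝ) : ℝ :=
  wedgeSq (deriv u p.2) (u p.1 - u p.2) ^ ((q - 2) / 2) / ‖u p.1 - u p.2‖ ^ (2 * q) *
    wedgeInner (deriv u p.2) (u p.1 - u p.2) (deriv v p.2)
      (w p.1 - w p.2 - wrap (p.1 - p.2) • deriv w p.2)

/-- The functional `M(u; v, w)` appearing in the first variation of `TP`. -/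
def Mfun {n : ℕ} (q : ℝ) (u v w : ℝ → EuclideanSpace ℝ (Fin n)) : ℝ :=
  ∫ p in unitSq, Mintegrand q u v w p

/-- The integrand of the functional `A(u; v, w)`. -/
def Aintegrand {n : ℕ} (q : ℝ) (u v w : ℝ → EuclideanSpace ℝ (Fin n)) (p : ℝ × ℝ) : ℝ :=
  wedgeSq (deriv u p.2) (u p.1 - u p.2) ^ (q / 2) / ‖u p.1 - u p.2‖ ^ (2 * q + 2) *
    ⟪v p.1 - v p.2, w p.1 - w p.2⟫

/-- The functional `A(u; v, w)` appearing in the first variation of `TP`. -/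
def Afun {n : ℕ} (q : ℝ) (u v w : ℝ → EuclideanSpace ℝ (Fin n)) : ℝ :=
  ∫ p in unitSq, Aintegrand q u v w p

/-- The first variation `δTP(u)[w] = M(u;u,w) + M(u;w,u) - 2A(u;u,w)`. -/
def deltaTP {n : ℕ} (q : ℝ) (u w : ℝ → EuclideanSpace ℝ (Fin n)) : ℝ :=
  Mfun q u u w + Mfun q u w u - 2 * Afun q u u w

/-- The `H²` inner product on periodic curves. -/
def H2inner (v w : ℝ → EuclideanSpace ℝ (Fin 3)) : ℝ :=
  ∫ x in Ioc (0 : ℝ) 1,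
    (⟪v x, w x⟫ + ⟪deriv v x, deriv w x⟫ + ⟪deriv (deriv v) x, deriv (deriv w) x⟫)

/-- The total energy `E(u) = (κ/2)∫|u''|² + ρ TP(u)`. -/
def energyE (κ ρ q : ℝ) (u : ℝ → EuclideanSpace ℝ (Fin 3)) : ℝ :=
  κ / 2 * (∫ x in Ioc (0 : ℝ) 1, ‖deriv (deriv u) x‖ ^ 2) + ρ * TPr q u

/-!
Finiteness of `bil u` is the bi-Lipschitz inequality `|x - y|_{ℝ/ℤ} ≤ C ‖u x - u y‖`.
Near the diagonal it follows from the lower bound `m` on `‖u'‖` together with the uniform continuity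
of `u'`: where `u'` stays `m/2`-close to `u' y`, the curve moves at speed at least `m/2`. Away from
the diagonal it follows from injectivity of `u` on the compact circle. Conversely, the inequality
forces injectivity, and dividing by `|x - y|` and letting `x → y` gives `‖u'‖ ≥ 1/C`.
-/

open Function

theorem Function.Periodic.continuous_lift {β : Type*} [TopologicalSpace β] {f : ℝ → β} {p : ℝ}
    (h : Periodic f p) (hf : Continuous f) : Continuous (h.lift : AddCircle p → β) :=
  continuous_quot_lift _ hf

theorem Function.Periodic.uniformContinuous {β : Type*} [UniformSpace β] {f : ℝ → β} {p : ℝ}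
    [Fact (0 < p)] (h : Periodic f p) (hf : Continuous f) : UniformContinuous f := by
  have hmk : UniformContinuous ((↑) : ℝ → AddCircle p) :=
    uniformContinuous_of_continuousAt_zero (QuotientAddGroup.mk' _)
      (AddCircle.continuous_mk' p).continuousAt
  exact (CompactSpace.uniformContinuous_of_continuous (h.continuous_lift hf)).comp hmk

theorem Function.Periodic.deriv {E : Type*} [NormedAddCommGroup E] [NormedSpace ℝ E]
    {f : ℝ → E} {p : ℝ} (h : Periodic f p) : Periodic (deriv f) p := fun x => by
  rw [← deriv_comp_add_const, h.funext]

theorem sub_mul_abs_le_norm_image_sub {E : Type*} [NormedAddCommGroup E] [NormedSpace ℝ E]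
    {f f' : ℝ → E} {s : Set ℝ} {a b C : ℝ} (hs : Convex ℝ s)
    (hf : ∀ x ∈ s, HasDerivWithinAt f (f' x) s x) (bound : ∀ x ∈ s, ‖f' x - f' b‖ ≤ C)
    (ha : a ∈ s) (hb : b ∈ s) : (‖f' b‖ - C) * |a - b| ≤ ‖f a - f b‖ := by
  have hg : ∀ x ∈ s, HasDerivWithinAt (fun t => f t - t • f' b) (f' x - f' b) s x := by
    intro x hx
    have := (hf x hx).sub ((hasDerivWithinAt_id x s).smul_const (f' b))
    rwa [one_smul] at this
  have hmvt := hs.norm_image_sub_le_of_norm_hasDerivWithin_le hg bound hb ha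
  have hsplit : (a - b) • f' b = (f a - f b) - ((f a - a • f' b) - (f b - b • f' b)) := by
    rw [sub_smul]; abel
  have htri := norm_sub_le (f a - f b) ((f a - a • f' b) - (f b - b • f' b))
  rw [← hsplit, norm_smul, Real.norm_eq_abs] at htri
  rw [Real.norm_eq_abs] at hmvt
  nlinarith [abs_nonneg (a - b)]

theorem one_le_mul_norm_of_hasDerivAt {E : Type*} [NormedAddCommGroup E] [NormedSpace ℝ E]
    {f : ℝ → E} {f' : E} {x C : ℝ} (hf : HasDerivAt f f' x)
    (h : ∀ᶠ y in 𝓝 x, |y - x| ≤ C * ‖f y - f x‖) : 1 ≤ C * ‖f'‖ := by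
  have hslope : Tendsto (fun y => C * ‖slope f x y‖) (𝓝[≠] x) (𝓝 (C * ‖f'‖)) :=
    ((hasDerivAt_iff_tendsto_slope.mp hf).norm).const_mul C
  refine ge_of_tendsto hslope ?_
  filter_upwards [nhdsWithin_le_nhds h, self_mem_nhdsWithin] with y hy hne
  have hpos : 0 < |y - x| := abs_pos.mpr (sub_ne_zero.mpr hne)
  rw [slope_def_module, norm_smul, norm_inv, Real.norm_eq_abs, ← mul_assoc, mul_comm C,
    mul_assoc, inv_mul_eq_div, one_le_div hpos]
  exact hy

section circle

theorem circDist_nonneg (x y : ℝ) : 0 ≤ circDist x y := norm_nonneg _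

theorem circDist_eq_norm_sub (x y : ℝ) :
    circDist x y = ‖(x : AddCircle (1 : ℝ)) - (y : AddCircle (1 : ℝ))‖ := by
  rw [circDist, AddCircle.coe_sub]

theorem circDist_eq_zero_iff {x y : ℝ} :
    circDist x y = 0 ↔ (x : AddCircle (1 : ℝ)) = (y : AddCircle (1 : ℝ)) := by
  rw [circDist_eq_norm_sub, norm_eq_zero, sub_eq_zero]

theorem circDist_le_half (x y : ℝ) : circDist x y ≤ 1 / 2 := by
  have := AddCircle.norm_le_half_period (1 : ℝ) (x := ((x - y : ℝ) : AddCircle (1 : ℝ)))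
    one_ne_zero
  simpa [circDist] using this

theorem circDist_eq_abs_sub_round (x y : ℝ) : circDist x y = |x - y - round (x - y)| := by
  rw [circDist, AddCircle.norm_eq]; simp

theorem circDist_eq_abs {x y : ℝ} (h : |x - y| ≤ 1 / 2) : circDist x y = |x - y| :=
  (AddCircle.norm_coe_eq_abs_iff (1 : ℝ) one_ne_zero).mpr (by simpa using h)

end circle

section bil

variable {n : ℕ} {u : ℝ → EuclideanSpace ℝ (Fin n)}

theorem bil_le_ofReal {C : ℝ} (h : ∀ x y, circDist x y ≤ C * ‖u x - u y‖) :
    bil u ≤ ENNReal.ofReal C :=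
  iSup₂_le fun x y => iSup_le fun _ => ENNReal.div_le_of_le_mul <| by
    rw [← ENNReal.ofReal_mul' (norm_nonneg _)]
    exact ENNReal.ofReal_le_ofReal (h x y)

theorem circDist_le_toReal_bil_mul (h : bil u ≠ ⊤) (x y : ℝ) :
    circDist x y ≤ (bil u).toReal * ‖u x - u y‖ := by
  by_cases hxy : circDist x y = 0
  · rw [hxy]; positivity
  have hle : ENNReal.ofReal (circDist x y) / ENNReal.ofReal ‖u x - u y‖ ≤ bil u :=
    le_iSup₂_of_le x y (le_iSup_of_le hxy le_rfl)
  rw [ENNReal.div_le_iff_le_mul (Or.inr h) (Or.inl ENNReal.ofReal_ne_top),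
    ← ENNReal.ofReal_toReal h, ← ENNReal.ofReal_mul ENNReal.toReal_nonneg] at hle
  exact (ENNReal.ofReal_le_ofReal_iff (by positivity)).mp hle

theorem bil_lt_top_iff : bil u < ⊤ ↔ ∃ C, ∀ x y, circDist x y ≤ C * ‖u x - u y‖ :=
  ⟨fun h => ⟨_, circDist_le_toReal_bil_mul h.ne⟩,
    fun ⟨_, hC⟩ => (bil_le_ofReal hC).trans_lt ENNReal.ofReal_lt_top⟩

theorem embedded_of_circDist_le {C : ℝ} (h : ∀ x y, circDist x y ≤ C * ‖u x - u y‖) :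
    Embedded u := fun x y hxy => by
  have := h x y
  rw [hxy, sub_self, norm_zero, mul_zero] at this
  exact circDist_eq_zero_iff.mp (this.antisymm (circDist_nonneg x y))

theorem regular_of_circDist_le (hu : Differentiable ℝ u) {C : ℝ}
    (h : ∀ x y, circDist x y ≤ C * ‖u x - u y‖) : Regular u := by
  have hderiv : ∀ x, 1 ≤ C * ‖deriv u x‖ := fun x => by
    refine one_le_mul_norm_of_hasDerivAt (hu x).hasDerivAt ?_
    filter_upwards [Metric.closedBall_mem_nhds x one_half_pos] with y hy
    rw [← circDist_eq_abs (by simpa [Real.dist_eq] using hy)]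
    exact h y x
  have hC : 0 < C := by nlinarith [hderiv 0, norm_nonneg (deriv u 0)]
  refine (one_div_pos.mpr hC).trans_le (le_ciInf fun x => ?_)
  rw [div_le_iff₀' hC]
  exact hderiv x

theorem exists_pos_mul_abs_le_norm_sub (hu : ContDiff ℝ 1 u) (hper : Periodic u 1)
    (hreg : Regular u) :
    ∃ c > 0, ∃ δ > 0, ∀ x y, |x - y| < δ → c * |x - y| ≤ ‖u x - u y‖ := by
  set m := ⨅ x, ‖deriv u x‖
  have hm : 0 < m := hreg
  have hmle : ∀ x, m ≤ ‖deriv u x‖ := ciInf_le ⟨0, by rintro _ ⟨t, rfl⟩; exact norm_nonneg _⟩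
  obtain ⟨δ, hδ, hclose⟩ := Metric.uniformContinuous_iff.mp
    (hper.deriv.uniformContinuous (hu.continuous_deriv le_rfl)) (m / 2) (half_pos hm)
  refine ⟨m / 2, half_pos hm, δ, hδ, fun x y hxy => ?_⟩
  have hball : ∀ t ∈ Metric.ball y δ, ‖deriv u t - deriv u y‖ ≤ m / 2 := fun t ht =>
    (hclose ht).le
  have hspeed := sub_mul_abs_le_norm_image_sub (convex_ball y δ)
    (fun t _ => ((hu.differentiable one_ne_zero) t).hasDerivAt.hasDerivWithinAt) hball
    (by simpa [Real.dist_eq] using hxy) (Metric.mem_ball_self hδ)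
  nlinarith [hmle y, abs_nonneg (x - y)]

theorem exists_pos_le_norm_sub_of_le_circDist (hu : Continuous u) (hper : Periodic u 1)
    (hemb : Embedded u) {δ : ℝ} (hδ : 0 < δ) :
    ∃ ε > 0, ∀ x y, δ ≤ circDist x y → ε ≤ ‖u x - u y‖ := by
  let U : AddCircle (1 : ℝ) → EuclideanSpace ℝ (Fin n) := hper.lift
  have hU : Continuous U := hper.continuous_lift hu
  have hUinj : Injective U := by
    intro s t hst
    obtain ⟨x, rfl⟩ := QuotientAddGroup.mk_surjective s
    obtain ⟨y, rfl⟩ := QuotientAddGroup.mk_surjective t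
    exact hemb x y hst
  set K : Set (AddCircle (1 : ℝ) × AddCircle (1 : ℝ)) := {q | δ ≤ ‖q.1 - q.2‖}
  have hK : IsCompact K :=
    (isClosed_le continuous_const (continuous_fst.sub continuous_snd).norm).isCompact
  have hpos : ∀ q ∈ K, 0 < ‖U q.1 - U q.2‖ := fun q hq => by
    have hne : q.1 ≠ q.2 := sub_ne_zero.mp (norm_pos_iff.mp (hδ.trans_le hq))
    exact norm_pos_iff.mpr (sub_ne_zero.mpr (hUinj.ne hne))
  obtain ⟨ε, hε, hbound⟩ :=
    hK.exists_forall_le' ((hU.comp continuous_fst).sub (hU.comp continuous_snd)).norm.continuousOn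
      hpos
  refine ⟨ε, hε, fun x y hxy => ?_⟩
  rw [circDist_eq_norm_sub] at hxy
  exact hbound ((x : AddCircle (1 : ℝ)), (y : AddCircle (1 : ℝ))) hxy

theorem exists_circDist_le_mul_norm_sub (hu : ContDiff ℝ 1 u) (hper : Periodic u 1)
    (hemb : Embedded u) (hreg : Regular u) :
    ∃ C, ∀ x y, circDist x y ≤ C * ‖u x - u y‖ := by
  obtain ⟨c, hc, δ, hδ, hnear⟩ := exists_pos_mul_abs_le_norm_sub hu hper hreg
  obtain ⟨ε, hε, hfar⟩ := exists_pos_le_norm_sub_of_le_circDist hu.continuous hper hemb hδ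
  refine ⟨max (1 / c) (1 / (2 * ε)), fun x y => ?_⟩
  rcases lt_or_ge (circDist x y) δ with hxy | hxy
  · have hshift : u (x - round (x - y) * 1) = u x := hper.sub_int_mul_eq _
    have hd : circDist x y = |x - round (x - y) * 1 - y| := by
      rw [circDist_eq_abs_sub_round, mul_one, sub_right_comm]
    have hlower := hnear (x - round (x - y) * 1) y (hd ▸ hxy)
    rw [← hd, hshift] at hlower
    calc circDist x y ≤ 1 / c * ‖u x - u y‖ := by rw [div_mul_eq_mul_div, le_div_iff₀ hc]; linarith
      _ ≤ _ := by gcongr; exact le_max_left _ _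
  · calc circDist x y ≤ 1 / (2 * ε) * ε := by
          rw [div_mul_eq_mul_div, le_div_iff₀ (by positivity)]
          nlinarith [circDist_le_half x y]
      _ ≤ _ := by gcongr; exacts [le_max_right _ _, hfar x y hxy]

end bil

/-- Lemma 3.7, characterization of bi-Lipschitz curves:
a `C¹` curve on `ℝ/ℤ` is embedded and regular if and only if `bil(u) < ∞`. -/
theorem embedded_regular_iff_bil_lt_top (n : ℕ)
    (u : ℝ → EuclideanSpace ℝ (Fin n))
    (hC1 : ContDiff ℝ 1 u) (hper : Function.Periodic u 1) :
    (Embedded u ∧ Regular u) ↔ bil u < ⊤ := by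
  rw [bil_lt_top_iff]
  constructor
  · rintro ⟨hemb, hreg⟩
    exact exists_circDist_le_mul_norm_sub hC1 hper hemb hreg
  · rintro ⟨C, hC⟩
    exact ⟨embedded_of_circDist_le hC, regular_of_circDist_le (hC1.differentiable one_ne_zero) hC⟩
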